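/- arXiv:math/0403494 — 3 statements merged into one kernel-verified Lean document; each statement's English description precedes it below -/
import Mathlib

section
/- The geometric realization of the one-point suspension Susp₁(v,K) is homeomorphic to the suspension S⁰ ∗ K of K. -/
open Finset

variable {V : Type} [DecidableEq V]

/-- `K` (a finite set of finite sets) is an abstract simplicial complex:
it contains the empty face and is closed under taking subsets. -/
def IsComplex (K : Finset (Finset V)) : Prop :=
  ∅ ∈ K ∧ ∀ s ∈ K, ∀ t ⊆ s, t ∈ K

/-- The facets (maximal faces) of `K`. -/
def facetsOf (K : Finset (Finset V)) : Finset (Finset V) :=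
  K.filter fun s => ∀ t ∈ K, s ⊆ t → s = t

/-- The vertex set of `K`. -/
def vertsOf (K : Finset (Finset V)) : Finset V := K.sup id

/-- The link of the vertex `v` in `K`. -/
def linkOf (K : Finset (Finset V)) (v : V) : Finset (Finset V) :=
  (K.filter fun s => v ∈ s).image fun s => s.erase v

/-- The deletion of the vertex `v` from `K`. -/
def delOf (K : Finset (Finset V)) (v : V) : Finset (Finset V) :=
  K.filter fun s => v ∉ s

/-- The star of the vertex `v` in `K`. -/
def starOf (K : Finset (Finset V)) (v : V) : Finset (Finset V) :=
  K.filter fun s => v ∈ s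

/-- Join of two face sets. -/
def joinF (K L : Finset (Finset V)) : Finset (Finset V) :=
  (K ×ˢ L).image fun p => p.1 ∪ p.2

/-- Image of a complex under a vertex map. -/
def mapC {W : Type} [DecidableEq W] (f : V → W) (K : Finset (Finset V)) :
    Finset (Finset W) :=
  K.image (Finset.image f)

/-- The full edge `{v', v''}` on the two new vertices `v' = Sum.inr false`,
`v'' = Sum.inr true`, as a simplicial complex. -/
def edgeC (V : Type) [DecidableEq V] : Finset (Finset (V ⊕ Bool)) :=
  ({Sum.inr false, Sum.inr true} : Finset (V ⊕ Bool)).powerset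

/-- The boundary of the edge `{v', v''}`. -/
def bedgeC (V : Type) [DecidableEq V] : Finset (Finset (V ⊕ Bool)) :=
  (edgeC V).erase {Sum.inr false, Sum.inr true}

/-- The one-point suspension of `K` at the vertex `v`:
`((∂e ∗ K) ∖ (∂e ∗ star_K(v))) ∪ (e ∗ link_K(v))` where `e = {v',v''}`. -/
def susp (v : V) (K : Finset (Finset V)) : Finset (Finset (V ⊕ Bool)) :=
  (joinF (bedgeC V) (mapC Sum.inl K) \ joinF (bedgeC V) (mapC Sum.inl (starOf K v))) ∪
    joinF (edgeC V) (mapC Sum.inl (linkOf K v))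

/-- The geometric realization of a face set `L` on the (finite) vertex type `W`,
as a subspace of `W → ℝ`: convex combinations of vertices supported on a face. -/
def realiz {W : Type} [DecidableEq W] [Fintype W] (L : Finset (Finset W)) :
    Set (W → ℝ) :=
  {f | (∀ x, 0 ≤ f x) ∧ (∑ x, f x) = 1 ∧
    (Finset.univ.filter fun x => f x ≠ 0) ∈ L}

/-- The two-point complex `S⁰` on the new vertices `v' = Sum.inr false`,
`v'' = Sum.inr true`. -/
def s0C (V : Type) [DecidableEq V] : Finset (Finset (V ⊕ Bool)) :=
  {∅, {Sum.inr false}, {Sum.inr true}}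

-- ====== auxiliary ======

lemma subset_pair' {α : Type*} [DecidableEq α] {a b : α} {s : Finset α} (h : s ⊆ {a, b}) :
    s = ∅ ∨ s = {a} ∨ s = {b} ∨ s = {a, b} := by
  by_cases ha : a ∈ s <;> by_cases hb : b ∈ s
  · right; right; right
    apply subset_antisymm h
    intro x hx
    simp only [mem_insert, mem_singleton] at hx
    rcases hx with rfl | rfl <;> assumption
  · by_cases hab : a = b
    · exact absurd (hab ▸ ha) hb
    · right; left
      apply subset_antisymm _ (by simpa using ha)
      intro x hx
      have := h hx
      simp only [mem_insert, mem_singleton] at this ⊢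
      rcases this with rfl | rfl
      · rfl
      · exact absurd hx hb
  · right; right; left
    apply subset_antisymm _ (by simpa using hb)
    intro x hx
    have := h hx
    simp only [mem_insert, mem_singleton] at this ⊢
    rcases this with rfl | rfl
    · exact absurd hx ha
    · rfl
  · left
    apply eq_empty_of_forall_notMem
    intro x hx
    have := h hx
    simp only [mem_insert, mem_singleton] at this
    rcases this with rfl | rfl
    · exact ha hx
    · exact hb hx

lemma mem_joinF {K L : Finset (Finset V)} {s : Finset V} :
    s ∈ joinF K L ↔ ∃ a ∈ K, ∃ b ∈ L, s = a ∪ b := by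
  unfold joinF
  simp only [Finset.mem_image, Finset.mem_product, Prod.exists]
  constructor
  · rintro ⟨a, b, ⟨hA, hB⟩, rfl⟩; exact ⟨a, hA, b, hB, rfl⟩
  · rintro ⟨a, hA, b, hB, rfl⟩; exact ⟨a, b, ⟨hA, hB⟩, rfl⟩

lemma mem_mapC {W : Type} [DecidableEq W] {f : V → W} {K : Finset (Finset V)}
    {s : Finset W} : s ∈ mapC f K ↔ ∃ t ∈ K, s = t.image f := by
  unfold mapC
  simp only [Finset.mem_image]
  tauto

/-- structure of faces of the one-point suspension -/
lemma susp_struct {K : Finset (Finset V)} {v : V} (hK : IsComplex K)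
    {s : Finset (V ⊕ Bool)} (hs : s ∈ susp v K) :
    ∃ ε τ, ε ⊆ ({Sum.inr false, Sum.inr true} : Finset (V ⊕ Bool)) ∧ τ ∈ K ∧ v ∉ τ ∧
      s = ε ∪ τ.image Sum.inl ∧
      (ε = ({Sum.inr false, Sum.inr true} : Finset (V ⊕ Bool)) → insert v τ ∈ K) := by
  rcases Finset.mem_union.mp hs with h | h
  · rcases Finset.mem_sdiff.mp h with ⟨h1, h2⟩
    rcases mem_joinF.mp h1 with ⟨ε, hε, b, hb, rfl⟩
    rcases mem_mapC.mp hb with ⟨τ, hτ, rfl⟩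
    have hεe : ε ≠ ({Sum.inr false, Sum.inr true} : Finset (V ⊕ Bool)) ∧
        ε ⊆ ({Sum.inr false, Sum.inr true} : Finset (V ⊕ Bool)) := by
      have := Finset.mem_erase.mp hε
      exact ⟨this.1, Finset.mem_powerset.mp this.2⟩
    refine ⟨ε, τ, hεe.2, hτ, ?_, rfl, fun h => absurd h hεe.1⟩
    intro hvτ
    exact h2 (mem_joinF.mpr ⟨ε, hε, τ.image Sum.inl,
      mem_mapC.mpr ⟨τ, Finset.mem_filter.mpr ⟨hτ, hvτ⟩, rfl⟩, rfl⟩)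
  · rcases mem_joinF.mp h with ⟨ε, hε, b, hb, rfl⟩
    rcases mem_mapC.mp hb with ⟨lam, hlam, rfl⟩
    rcases Finset.mem_image.mp hlam with ⟨σ, hσ, rfl⟩
    rcases Finset.mem_filter.mp hσ with ⟨hσK, hvσ⟩
    have hins : insert v (σ.erase v) = σ := Finset.insert_erase hvσ
    refine ⟨ε, σ.erase v, Finset.mem_powerset.mp hε, ?_, Finset.notMem_erase _ _, rfl,
      fun _ => by rw [hins]; exact hσK⟩
    exact hK.2 σ hσK _ (Finset.erase_subset _ _)


set_option linter.unusedSectionVars false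

/-- forward map: merge the min of the two edge coordinates into the apex `v`. -/
noncomputable def phiMap (v : V) (f : V ⊕ Bool → ℝ) : V ⊕ Bool → ℝ
  | Sum.inl x => if x = v then 2 * min (f (Sum.inr false)) (f (Sum.inr true))
                 else f (Sum.inl x)
  | Sum.inr b => f (Sum.inr b) - min (f (Sum.inr false)) (f (Sum.inr true))

/-- backward map: split the apex coordinate evenly between the two edge vertices. -/
noncomputable def psiMap (v : V) (g : V ⊕ Bool → ℝ) : V ⊕ Bool → ℝ
  | Sum.inl x => if x = v then 0 else g (Sum.inl x)
  | Sum.inr b => g (Sum.inr b) + g (Sum.inl v) / 2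

@[simp] lemma phiMap_inl (v : V) (f : V ⊕ Bool → ℝ) (x : V) :
    phiMap v f (Sum.inl x) = if x = v then 2 * min (f (Sum.inr false)) (f (Sum.inr true))
      else f (Sum.inl x) := rfl

@[simp] lemma phiMap_inr (v : V) (f : V ⊕ Bool → ℝ) (b : Bool) :
    phiMap v f (Sum.inr b) = f (Sum.inr b) - min (f (Sum.inr false)) (f (Sum.inr true)) := rfl

@[simp] lemma psiMap_inl (v : V) (g : V ⊕ Bool → ℝ) (x : V) :
    psiMap v g (Sum.inl x) = if x = v then 0 else g (Sum.inl x) := rfl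

@[simp] lemma psiMap_inr (v : V) (g : V ⊕ Bool → ℝ) (b : Bool) :
    psiMap v g (Sum.inr b) = g (Sum.inr b) + g (Sum.inl v) / 2 := rfl

lemma inl_not_mem_pair (x : V) :
    Sum.inl x ∉ ({Sum.inr false, Sum.inr true} : Finset (V ⊕ Bool)) := by simp

/-- if the support is a face decomposed as `ε ∪ inl '' τ`, extract coordinate facts -/
lemma supp_decomp {f : V ⊕ Bool → ℝ} [Fintype V] {ε : Finset (V ⊕ Bool)} {τ : Finset V}
    (hε : ε ⊆ ({Sum.inr false, Sum.inr true} : Finset (V ⊕ Bool)))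
    (hsupp : (Finset.univ.filter fun x => f x ≠ 0) = ε ∪ τ.image Sum.inl) :
    (∀ x : V, f (Sum.inl x) ≠ 0 ↔ x ∈ τ) ∧
    (∀ b : Bool, f (Sum.inr b) ≠ 0 ↔ Sum.inr b ∈ ε) := by
  constructor
  · intro x
    have := Finset.ext_iff.mp hsupp (Sum.inl x)
    simp only [Finset.mem_filter, Finset.mem_univ, true_and, Finset.mem_union,
      Finset.mem_image] at this
    constructor
    · intro h
      rcases this.mp h with h' | ⟨y, hy, hxy⟩
      · exact absurd (hε h') (inl_not_mem_pair x)
      · obtain rfl : y = x := Sum.inl.injEq y x ▸ hxy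
        exact hy
    · intro h
      exact this.mpr (Or.inr ⟨x, h, rfl⟩)
  · intro b
    have := Finset.ext_iff.mp hsupp (Sum.inr b)
    simp only [Finset.mem_filter, Finset.mem_univ, true_and, Finset.mem_union,
      Finset.mem_image] at this
    constructor
    · intro h
      rcases this.mp h with h' | ⟨y, _, hxy⟩
      · exact h'
      · exact absurd hxy (by simp)
    · intro h
      exact this.mpr (Or.inl h)


lemma apex_zero [Fintype V] {K : Finset (Finset V)} {v : V} (hK : IsComplex K)
    {f : V ⊕ Bool → ℝ} (hf : f ∈ realiz (susp v K)) : f (Sum.inl v) = 0 := by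
  by_contra h
  obtain ⟨ε, τ, hε, hτK, hvτ, hsupp, _⟩ := susp_struct hK hf.2.2
  exact hvτ (((supp_decomp hε hsupp).1 v).mp h)

lemma phi_mem [Fintype V] {K : Finset (Finset V)} {v : V} (hK : IsComplex K)
    {f : V ⊕ Bool → ℝ} (hf : f ∈ realiz (susp v K)) :
    phiMap v f ∈ realiz (joinF (s0C V) (mapC Sum.inl K)) := by
  obtain ⟨hpos, hsum, hface⟩ := hf
  have hfv : f (Sum.inl v) = 0 := apex_zero hK ⟨hpos, hsum, hface⟩
  obtain ⟨ε, τ, hε, hτK, hvτ, hsupp, hins⟩ := susp_struct hK hface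
  obtain ⟨hL, hR⟩ := supp_decomp hε hsupp
  set m := min (f (Sum.inr false)) (f (Sum.inr true)) with hm
  have hm0 : 0 ≤ m := le_min (hpos _) (hpos _)
  -- nonnegativity
  have hpos' : ∀ x, 0 ≤ phiMap v f x := by
    rintro (x | b)
    · rw [phiMap_inl]; split_ifs with h
      · linarith
      · exact hpos _
    · rw [phiMap_inr]
      cases b
      · simpa using min_le_left (f (Sum.inr false)) (f (Sum.inr true))
      · simpa using min_le_right (f (Sum.inr false)) (f (Sum.inr true))
  -- sum
  have hsum' : ∑ x, phiMap v f x = 1 := by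
    rw [Fintype.sum_sum_type] at hsum ⊢
    have h1 : ∀ x : V, phiMap v f (Sum.inl x) = f (Sum.inl x) + (if x = v then 2 * m else 0) := by
      intro x
      by_cases hx : x = v
      · subst hx; simp [hfv, hm]
      · simp [hx]
    have h2 : ∑ x : V, phiMap v f (Sum.inl x) = (∑ x : V, f (Sum.inl x)) + 2 * m := by
      simp only [h1, Finset.sum_add_distrib, Finset.sum_ite_eq' Finset.univ v,
        Finset.mem_univ, if_true]
    rw [h2]
    simp only [Fintype.sum_bool, phiMap_inr] at hsum ⊢
    linarith
  refine ⟨hpos', hsum', ?_⟩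
  by_cases hzero : m = 0
  · -- phiMap v f = f
    have heq : phiMap v f = f := by
      funext w
      rcases w with x | b
      · rw [phiMap_inl]; split_ifs with h
        · rw [h, hfv, ← hm, hzero]; ring
        · rfl
      · rw [phiMap_inr, ← hm, hzero]; ring
    rw [heq, hsupp]
    have hεne : ε ≠ ({Sum.inr false, Sum.inr true} : Finset (V ⊕ Bool)) := by
      rintro rfl
      have h0 : f (Sum.inr false) ≠ 0 := (hR false).mpr (by simp)
      have h1 : f (Sum.inr true) ≠ 0 := (hR true).mpr (by simp)
      have := lt_min ((hpos _).lt_of_ne (Ne.symm h0)) ((hpos _).lt_of_ne (Ne.symm h1))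
      rw [← hm] at this; linarith [this, hzero ▸ le_refl (0:ℝ)]
    refine mem_joinF.mpr ⟨ε, ?_, τ.image Sum.inl, mem_mapC.mpr ⟨τ, hτK, rfl⟩, rfl⟩
    rcases subset_pair' hε with rfl | rfl | rfl | h
    · simp [s0C]
    · simp [s0C]
    · simp [s0C]
    · exact absurd h hεne
  · -- both edge coords positive, so ε is the full edge
    have hf0 : f (Sum.inr false) ≠ 0 := by
      intro h; apply hzero; rw [hm, h]
      exact min_eq_left (hpos _)
    have hf1 : f (Sum.inr true) ≠ 0 := by
      intro h; apply hzero; rw [hm, h]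
      exact min_eq_right (hpos _)
    have hεfull : ε = ({Sum.inr false, Sum.inr true} : Finset (V ⊕ Bool)) := by
      apply subset_antisymm hε
      intro w hw
      simp only [Finset.mem_insert, Finset.mem_singleton] at hw
      rcases hw with rfl | rfl
      · exact (hR false).mp hf0
      · exact (hR true).mp hf1
    have hτv : insert v τ ∈ K := hins hεfull
    set ε' : Finset (V ⊕ Bool) :=
      ({Sum.inr false, Sum.inr true} : Finset (V ⊕ Bool)).filter
        (fun w => phiMap v f w ≠ 0) with hε'
    have hsupp' : (Finset.univ.filter fun w => phiMap v f w ≠ 0) =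
        ε' ∪ (insert v τ).image Sum.inl := by
      ext w
      rcases w with x | b
      · simp only [Finset.mem_filter, Finset.mem_univ, true_and, Finset.mem_union,
          hε', Finset.mem_image, Finset.mem_insert]
        constructor
        · intro h
          right
          by_cases hx : x = v
          · exact ⟨x, Or.inl hx, rfl⟩
          · rw [phiMap_inl, if_neg hx] at h
            exact ⟨x, Or.inr ((hL x).mp h), rfl⟩
        · rintro (⟨h, _⟩ | ⟨y, hy, hxy⟩)
          · exact absurd h (by simp)
          · obtain rfl : y = x := Sum.inl.injEq y x ▸ hxy
            rcases hy with rfl | hy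
            · rw [phiMap_inl, if_pos rfl]
              intro h
              exact hzero (by linarith [mul_eq_zero.mp h])
            · rw [phiMap_inl]
              split_ifs with h
              · subst h; exact absurd hy hvτ
              · exact (hL y).mpr hy
      · simp only [Finset.mem_filter, Finset.mem_univ, true_and, Finset.mem_union,
          hε', Finset.mem_image, Finset.mem_insert]
        constructor
        · intro h
          left
          refine ⟨?_, h⟩
          cases b <;> simp
        · rintro (⟨_, h⟩ | ⟨y, _, hxy⟩)
          · exact h
          · exact absurd hxy (by simp)
    rw [hsupp']
    refine mem_joinF.mpr ⟨ε', ?_, (insert v τ).image Sum.inl,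
      mem_mapC.mpr ⟨insert v τ, hτv, rfl⟩, rfl⟩
    have hε'sub : ε' ⊆ ({Sum.inr false, Sum.inr true} : Finset (V ⊕ Bool)) :=
      Finset.filter_subset _ _
    have hε'ne : ε' ≠ ({Sum.inr false, Sum.inr true} : Finset (V ⊕ Bool)) := by
      intro hcontr
      have h0 : Sum.inr false ∈ ε' := hcontr ▸ (by simp)
      have h1 : Sum.inr true ∈ ε' := hcontr ▸ (by simp)
      rw [hε', Finset.mem_filter] at h0 h1
      rcases min_cases (f (Sum.inr false)) (f (Sum.inr true)) with ⟨hmin, _⟩ | ⟨hmin, _⟩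
      · exact h0.2 (by rw [phiMap_inr, hmin]; ring)
      · exact h1.2 (by rw [phiMap_inr, hmin]; ring)
    rcases subset_pair' hε'sub with h | h | h | h
    · rw [h]; simp [s0C]
    · rw [h]; simp [s0C]
    · rw [h]; simp [s0C]
    · exact absurd h hε'ne

lemma s0_struct {K : Finset (Finset V)} {s : Finset (V ⊕ Bool)}
    (hs : s ∈ joinF (s0C V) (mapC Sum.inl K)) :
    ∃ ε τ, ε ∈ s0C V ∧ τ ∈ K ∧ s = ε ∪ τ.image Sum.inl := by
  rcases mem_joinF.mp hs with ⟨ε, hε, b, hb, rfl⟩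
  rcases mem_mapC.mp hb with ⟨τ, hτ, rfl⟩
  exact ⟨ε, τ, hε, hτ, rfl⟩

lemma s0C_sub {ε : Finset (V ⊕ Bool)} (hε : ε ∈ s0C V) :
    ε ⊆ ({Sum.inr false, Sum.inr true} : Finset (V ⊕ Bool)) := by
  simp only [s0C, Finset.mem_insert, Finset.mem_singleton] at hε
  rcases hε with rfl | rfl | rfl <;> intro w hw <;> simp_all

lemma s0C_not_both {ε : Finset (V ⊕ Bool)} (hε : ε ∈ s0C V) :
    ¬(Sum.inr false ∈ ε ∧ Sum.inr true ∈ ε) := by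
  simp only [s0C, Finset.mem_insert, Finset.mem_singleton] at hε
  rcases hε with rfl | rfl | rfl <;> simp

lemma s0C_mem_bedge {ε : Finset (V ⊕ Bool)} (hε : ε ∈ s0C V) : ε ∈ bedgeC V := by
  rw [bedgeC, Finset.mem_erase]
  constructor
  · intro h
    exact s0C_not_both hε ⟨h ▸ (by simp), h ▸ (by simp)⟩
  · rw [edgeC, Finset.mem_powerset]
    exact s0C_sub hε

lemma psi_mem [Fintype V] {K : Finset (Finset V)} {v : V} (hK : IsComplex K)
    {g : V ⊕ Bool → ℝ} (hg : g ∈ realiz (joinF (s0C V) (mapC Sum.inl K))) :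
    psiMap v g ∈ realiz (susp v K) := by
  obtain ⟨hpos, hsum, hface⟩ := hg
  obtain ⟨ε, τ, hε, hτK, hsupp⟩ := s0_struct hface
  obtain ⟨hL, hR⟩ := supp_decomp (s0C_sub hε) hsupp
  have hc0 : 0 ≤ g (Sum.inl v) := hpos _
  have hpos' : ∀ x, 0 ≤ psiMap v g x := by
    rintro (x | b)
    · rw [psiMap_inl]; split_ifs
      · exact le_refl _
      · exact hpos _
    · rw [psiMap_inr]; have := hpos (Sum.inr b); linarith
  have hsum' : ∑ x, psiMap v g x = 1 := by
    rw [Fintype.sum_sum_type] at hsum ⊢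
    have h1 : ∀ x : V, psiMap v g (Sum.inl x) =
        g (Sum.inl x) - (if x = v then g (Sum.inl v) else 0) := by
      intro x
      by_cases hx : x = v
      · subst hx; simp
      · simp [hx]
    have h2 : ∑ x : V, psiMap v g (Sum.inl x) =
        (∑ x : V, g (Sum.inl x)) - g (Sum.inl v) := by
      simp only [h1, Finset.sum_sub_distrib, Finset.sum_ite_eq' Finset.univ v,
        Finset.mem_univ, if_true]
    rw [h2]
    simp only [Fintype.sum_bool, psiMap_inr] at hsum ⊢
    linarith
  refine ⟨hpos', hsum', ?_⟩
  by_cases hzero : g (Sum.inl v) = 0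
  · -- psiMap v g = g, and the face lies in the deleted part
    have heq : psiMap v g = g := by
      funext w
      rcases w with x | b
      · rw [psiMap_inl]; split_ifs with h
        · rw [h, hzero]
        · rfl
      · rw [psiMap_inr, hzero]; ring
    have hvτ : v ∉ τ := fun h => ((hL v).mpr h) hzero
    rw [heq, hsupp]
    apply Finset.mem_union_left
    rw [Finset.mem_sdiff]
    constructor
    · exact mem_joinF.mpr ⟨ε, s0C_mem_bedge hε, τ.image Sum.inl,
        mem_mapC.mpr ⟨τ, hτK, rfl⟩, rfl⟩
    · intro hmem
      rcases mem_joinF.mp hmem with ⟨ε', hε', b', hb', heq'⟩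
      rcases mem_mapC.mp hb' with ⟨σ, hσ, rfl⟩
      rcases Finset.mem_filter.mp hσ with ⟨hσK, hvσ⟩
      have : Sum.inl v ∈ ε ∪ τ.image Sum.inl := by
        rw [heq']
        exact Finset.mem_union_right _ (Finset.mem_image_of_mem _ hvσ)
      rcases Finset.mem_union.mp this with h | h
      · exact inl_not_mem_pair v (s0C_sub hε h)
      · rcases Finset.mem_image.mp h with ⟨y, hy, hxy⟩
        obtain rfl : y = v := Sum.inl.injEq y v ▸ hxy
        exact hvτ hy
  · -- c > 0 : v ∈ τ, support is edge ∪ inl '' (τ.erase v)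
    have hcpos : 0 < g (Sum.inl v) := hc0.lt_of_ne (Ne.symm hzero)
    have hvτ : v ∈ τ := (hL v).mp hzero
    have hsupp' : (Finset.univ.filter fun w => psiMap v g w ≠ 0) =
        ({Sum.inr false, Sum.inr true} : Finset (V ⊕ Bool)) ∪ (τ.erase v).image Sum.inl := by
      ext w
      rcases w with x | b
      · simp only [Finset.mem_filter, Finset.mem_univ, true_and, Finset.mem_union,
          Finset.mem_image, Finset.mem_insert, Finset.mem_singleton, Finset.mem_erase]
        constructor
        · intro h
          rw [psiMap_inl] at h
          split_ifs at h with hx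
          · exact absurd rfl h
          · exact Or.inr ⟨x, ⟨hx, (hL x).mp h⟩, rfl⟩
        · rintro (h | ⟨y, ⟨hyv, hy⟩, hxy⟩)
          · exact absurd h (by simp)
          · obtain rfl : y = x := Sum.inl.injEq y x ▸ hxy
            rw [psiMap_inl, if_neg hyv]
            exact (hL y).mpr hy
      · simp only [Finset.mem_filter, Finset.mem_univ, true_and, Finset.mem_union,
          Finset.mem_image, Finset.mem_insert, Finset.mem_singleton]
        constructor
        · intro _
          left; cases b <;> simp
        · intro _
          rw [psiMap_inr]
          have := hpos (Sum.inr b)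
          intro hcontr
          linarith
    rw [hsupp']
    apply Finset.mem_union_right
    refine mem_joinF.mpr ⟨_, ?_, (τ.erase v).image Sum.inl,
      mem_mapC.mpr ⟨τ.erase v, ?_, rfl⟩, rfl⟩
    · rw [edgeC, Finset.mem_powerset]
    · exact Finset.mem_image.mpr ⟨τ, Finset.mem_filter.mpr ⟨hτK, hvτ⟩, rfl⟩

lemma psi_phi [Fintype V] {K : Finset (Finset V)} {v : V} (hK : IsComplex K)
    {f : V ⊕ Bool → ℝ} (hf : f ∈ realiz (susp v K)) : psiMap v (phiMap v f) = f := by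
  have hfv : f (Sum.inl v) = 0 := apex_zero hK hf
  funext w
  rcases w with x | b
  · rw [psiMap_inl]
    split_ifs with h
    · rw [h, hfv]
    · rw [phiMap_inl, if_neg h]
  · rw [psiMap_inr, phiMap_inr, phiMap_inl, if_pos rfl]
    ring

lemma min_zero_of_s0 [Fintype V] {K : Finset (Finset V)}
    {g : V ⊕ Bool → ℝ} (hg : g ∈ realiz (joinF (s0C V) (mapC Sum.inl K))) :
    min (g (Sum.inr false)) (g (Sum.inr true)) = 0 := by
  obtain ⟨hpos, hsum, hface⟩ := hg
  obtain ⟨ε, τ, hε, hτK, hsupp⟩ := s0_struct hface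
  obtain ⟨hL, hR⟩ := supp_decomp (s0C_sub hε) hsupp
  rcases not_and_or.mp (s0C_not_both hε) with h | h
  · rw [min_eq_left]
    · exact not_not.mp (fun hc => h ((hR false).mp hc))
    · rw [not_not.mp (fun hc => h ((hR false).mp hc))]; exact hpos _
  · rw [min_eq_right]
    · exact not_not.mp (fun hc => h ((hR true).mp hc))
    · rw [not_not.mp (fun hc => h ((hR true).mp hc))]; exact hpos _

lemma phi_psi [Fintype V] {K : Finset (Finset V)} {v : V}
    {g : V ⊕ Bool → ℝ} (hg : g ∈ realiz (joinF (s0C V) (mapC Sum.inl K))) :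
    phiMap v (psiMap v g) = g := by
  have hmin : min (g (Sum.inr false)) (g (Sum.inr true)) = 0 := min_zero_of_s0 (K := K) hg
  have hmin' : min (psiMap v g (Sum.inr false)) (psiMap v g (Sum.inr true)) =
      g (Sum.inl v) / 2 := by
    rw [psiMap_inr, psiMap_inr, min_add_add_right, hmin, zero_add]
  funext w
  rcases w with x | b
  · rw [phiMap_inl]
    split_ifs with h
    · rw [hmin', h]; ring
    · rw [psiMap_inl, if_neg h]
  · rw [phiMap_inr, hmin', psiMap_inr]
    ring

lemma phi_cont (v : V) : Continuous fun f : V ⊕ Bool → ℝ => phiMap v f := by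
  apply continuous_pi
  rintro (x | b)
  · simp only [phiMap_inl]
    split_ifs
    · fun_prop
    · exact continuous_apply _
  · simp only [phiMap_inr]
    fun_prop

lemma psi_cont (v : V) : Continuous fun g : V ⊕ Bool → ℝ => psiMap v g := by
  apply continuous_pi
  rintro (x | b)
  · simp only [psiMap_inl]
    split_ifs
    · exact continuous_const
    · exact continuous_apply _
  · simp only [psiMap_inr]
    fun_prop


/-- The geometric realization of the one-point suspension
`Susp₁(v,K)` is homeomorphic to the suspension `S⁰ ∗ K` of `K`. -/
theorem susp_realization_homeomorph [Fintype V] (K : Finset (Finset V)) (v : V)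
    (hK : IsComplex K) (hv : {v} ∈ K) :
    Nonempty ((realiz (susp v K)) ≃ₜ (realiz (joinF (s0C V) (mapC Sum.inl K)))) := by
  refine ⟨{
    toFun := fun f => ⟨phiMap v f.1, phi_mem hK f.2⟩
    invFun := fun g => ⟨psiMap v g.1, psi_mem hK g.2⟩
    left_inv := fun f => Subtype.ext (psi_phi hK f.2)
    right_inv := fun g => Subtype.ext (phi_psi g.2)
    continuous_toFun := ?_
    continuous_invFun := ?_ }⟩
  · exact Continuous.subtype_mk ((phi_cont v).comp continuous_subtype_val) _
  · exact Continuous.subtype_mk ((psi_cont v).comp continuous_subtype_val) _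
end

section
/- If K is a k-neighborly simplicial complex, then the wreath product ∂Δ_d ≀ K is (k(d+1)+d)-neighborly. -/
open Finset

variable {V : Type} [DecidableEq V]

/-- The facet of the wreath product `∂Δ_d ≀ K` determined by a facet `F` of `K`
and a choice `c v` of the omitted copy for each vertex `v ∉ F`:
all `d+1` copies of vertices of `F` together with, for `v ∉ F`, all copies of `v`
except the copy `c v`. -/
def wreathFacet [Fintype V] (d : ℕ) (F : Finset V) (c : V → Fin (d + 1)) :
    Finset (V × Fin (d + 1)) :=
  Finset.univ.filter fun p => p.1 ∈ F ∨ p.2 ≠ c p.1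

/-- The wreath product `∂Δ_d ≀ K`: the simplicial complex on the `n(d+1)` vertices
`V × Fin (d+1)` generated by the facets `wreathFacet d F c` for facets `F` of `K`
and all choices `c` of omitted copies. -/
def wreathC [Fintype V] (d : ℕ) (K : Finset (Finset V)) :
    Finset (Finset (V × Fin (d + 1))) :=
  (((facetsOf K) ×ˢ (Finset.univ : Finset (V → Fin (d + 1)))).image
      fun q => wreathFacet d q.1 q.2).biUnion Finset.powerset

/-- `L` is `m`-neighborly: every set of at most `m` vertices of `L` is a face. -/
def Neighborly {W : Type} [DecidableEq W] (L : Finset (Finset W)) (m : ℕ) : Prop :=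
  ∀ s ⊆ vertsOf L, s.card ≤ m → s ∈ L


lemma exists_facet_sup (K : Finset (Finset V)) {s : Finset V} (hs : s ∈ K) :
    ∃ F ∈ facetsOf K, s ⊆ F := by
  classical
  obtain ⟨F, hF, hmax⟩ := (K.filter fun t => s ⊆ t).exists_max_image Finset.card
    ⟨s, by simp [hs]⟩
  simp only [Finset.mem_filter] at hF
  refine ⟨F, ?_, hF.2⟩
  simp only [facetsOf, Finset.mem_filter]
  refine ⟨hF.1, fun t ht hFt => Finset.eq_of_subset_of_card_le hFt ?_⟩
  exact hmax t (by simp [ht, hF.2.trans hFt])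

/-- If `K` is a `k`-neighborly simplicial complex, then the wreath
product `∂Δ_d ≀ K` is `(k(d+1)+d)`-neighborly. -/
theorem wreath_neighborly [Fintype V] (d k : ℕ) (K : Finset (Finset V))
    (hK : IsComplex K) (hverts : vertsOf K = Finset.univ)
    (hN : Neighborly K k) :
    Neighborly (wreathC d K) (k * (d + 1) + d) := by
  classical
  intro s _ hcard
  set B : Finset V := Finset.univ.filter (fun v => ∀ i, (v, i) ∈ s) with hBdef
  have hBcard : B.card * (d + 1) ≤ s.card := by
    have hsub : (B ×ˢ (Finset.univ : Finset (Fin (d + 1)))) ⊆ s := by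
      rintro ⟨v, i⟩ hp
      simp only [Finset.mem_product, hBdef, Finset.mem_filter, Finset.mem_univ,
        true_and] at hp
      exact hp.1 i
    calc B.card * (d + 1) = (B ×ˢ (Finset.univ : Finset (Fin (d + 1)))).card := by
          simp [Finset.card_product]
      _ ≤ s.card := Finset.card_le_card hsub
  have hBk : B.card ≤ k := by
    by_contra h
    push_neg at h
    have h2 : (k + 1) * (d + 1) ≤ B.card * (d + 1) := Nat.mul_le_mul_right _ h
    have h3 := le_trans h2 hBcard
    rw [Nat.succ_mul] at h3
    omega
  have hBK : B ∈ K := hN B (by rw [hverts]; exact Finset.subset_univ _) hBk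
  obtain ⟨F, hF, hBF⟩ := exists_facet_sup K hBK
  set c : V → Fin (d + 1) := fun v =>
    if h : ∃ i, (v, i) ∉ s then h.choose else 0 with hcdef
  have hsub : s ⊆ wreathFacet d F c := by
    rintro ⟨v, i⟩ hvi
    simp only [wreathFacet, Finset.mem_filter, Finset.mem_univ, true_and]
    by_cases hv : v ∈ F
    · exact Or.inl hv
    · right
      have hvB : v ∉ B := fun h => hv (hBF h)
      have hex : ∃ j, (v, j) ∉ s := by
        simp only [hBdef, Finset.mem_filter, Finset.mem_univ, true_and] at hvB
        push_neg at hvB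
        exact hvB
      intro hic
      have : (v, c v) ∉ s := by
        simp only [hcdef, dif_pos hex]
        exact hex.choose_spec
      exact this (hic ▸ hvi)
  simp only [wreathC, Finset.mem_biUnion, Finset.mem_image, Finset.mem_product,
    Finset.mem_powerset]
  exact ⟨wreathFacet d F c, ⟨(F, c), ⟨hF, Finset.mem_univ _⟩, rfl⟩, hsub⟩
end

section
/- If a simplicial complex K is not k-neighborly, then the wreath product ∂Δ_d ≀ K is not k(d+1)-neighborly. -/
open Finset

variable {V : Type} [DecidableEq V]

lemma mem_wreathFacet [Fintype V] {d : ℕ} {F : Finset V} {c : V → Fin (d + 1)}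
    {p : V × Fin (d + 1)} : p ∈ wreathFacet d F c ↔ p.1 ∈ F ∨ p.2 ≠ c p.1 := by
  simp [wreathFacet]

lemma mem_wreathC [Fintype V] {d : ℕ} {K : Finset (Finset V)}
    {q : Finset (V × Fin (d + 1))} :
    q ∈ wreathC d K ↔ ∃ F ∈ facetsOf K, ∃ c, q ⊆ wreathFacet d F c := by
  simp only [wreathC, Finset.mem_biUnion, Finset.mem_image, Finset.mem_product,
    Finset.mem_powerset, Finset.mem_univ, and_true]
  constructor
  · rintro ⟨t, ⟨⟨F, c⟩, hF, rfl⟩, hq⟩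
    exact ⟨F, hF, c, hq⟩
  · rintro ⟨F, hF, c, hq⟩
    exact ⟨wreathFacet d F c, ⟨⟨F, c⟩, hF, rfl⟩, hq⟩

lemma exists_facet_mem {K : Finset (Finset V)} {v : V}
    (hv : v ∈ vertsOf K) : ∃ F ∈ facetsOf K, v ∈ F := by
  obtain ⟨s, hs, hvs⟩ := Finset.mem_sup.1 hv
  have hne : (K.filter fun t => s ⊆ t).Nonempty :=
    ⟨s, Finset.mem_filter.2 ⟨hs, Finset.Subset.refl s⟩⟩
  obtain ⟨F, hF, hmax⟩ : ∃ F ∈ K.filter (fun t => s ⊆ t), ∀ x ∈ K.filter (fun t => s ⊆ t), ¬ F < x := by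
    obtain ⟨F, hFm⟩ := Finset.exists_maximal hne
    exact ⟨F, hFm.prop, fun x hx hlt => lt_irrefl _ (lt_of_lt_of_le hlt (hFm.2 hx hlt.le))⟩
  obtain ⟨hFK, hsF⟩ := Finset.mem_filter.1 hF
  refine ⟨F, Finset.mem_filter.2 ⟨hFK, fun t ht hFt => ?_⟩, hsF hvs⟩
  by_contra hne'
  exact hmax t (Finset.mem_filter.2 ⟨ht, hsF.trans hFt⟩) (lt_of_le_of_ne hFt hne')

/-- If a simplicial complex `K` is not `k`-neighborly, then the
wreath product `∂Δ_d ≀ K` is not `k(d+1)`-neighborly. -/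
theorem wreath_not_neighborly [Fintype V] (d k : ℕ) (K : Finset (Finset V))
    (hK : IsComplex K) (hverts : vertsOf K = Finset.univ)
    (hN : ¬ Neighborly K k) :
    ¬ Neighborly (wreathC d K) (k * (d + 1)):= by
  intro hNb
  rw [Neighborly] at hN
  push_neg at hN
  obtain ⟨s, hsv, hsk, hsK⟩ := hN
  set S : Finset (V × Fin (d + 1)) := s ×ˢ Finset.univ with hS
  have hsub : S ⊆ vertsOf (wreathC d K) := by
    intro p hp
    obtain ⟨hp1, -⟩ := Finset.mem_product.1 hp
    obtain ⟨F, hF, hvF⟩ := exists_facet_mem (hsv hp1)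
    refine Finset.mem_sup.2 ⟨wreathFacet d F (fun _ => 0), ?_, ?_⟩
    · exact mem_wreathC.2 ⟨F, hF, fun _ => 0, Finset.Subset.refl _⟩
    · exact mem_wreathFacet.2 (Or.inl hvF)
  have hcard : S.card ≤ k * (d + 1) := by
    rw [hS, Finset.card_product, Finset.card_univ, Fintype.card_fin]
    exact Nat.mul_le_mul_right _ hsk
  have hmem := hNb S hsub hcard
  obtain ⟨F, hF, c, hSF⟩ := mem_wreathC.1 hmem
  simp only [facetsOf, Finset.mem_filter] at hF
  obtain ⟨hFK, -⟩ := hF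
  apply hsK
  refine hK.2 F hFK s fun v hv => ?_
  have : (v, c v) ∈ S := Finset.mem_product.2 ⟨hv, Finset.mem_univ _⟩
  rcases mem_wreathFacet.1 (hSF this) with h | h
  · exact h
  · exact absurd rfl h
end
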